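/- Let {X_i : i ∈ I} be a family of Banach spaces and κ a cardinal. The ℓ1-sum (⊕_{i∈I} X_i)_{ℓ1} has the κ-Daugavet property if and only if every X_i has the κ-Daugavet property. -/

import Mathlib

universe u

/-- A slice of the closed unit ball of `X`. -/
def ballSlice {X : Type u} [NormedAddCommGroup X] [NormedSpace ℝ X]
    (f : X →L[ℝ] ℝ) (a : ℝ) : Set X :=
  {x | ‖x‖ ≤ 1 ∧ ‖f‖ - a < f x}

/-- `X` has the `κ`-Daugavet property. -/
def HasKDaugavet (X : Type u) [NormedAddCommGroup X] [NormedSpace ℝ X]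
    (κ : Cardinal.{u}) : Prop :=
  ∀ Y : Set X, Cardinal.mk Y ≤ κ → (∀ y ∈ Y, ‖y‖ = 1) →
    ∀ (f : X →L[ℝ] ℝ) (a : ℝ), 0 < a → ∀ ε : ℝ, 0 < ε →
      ∃ x ∈ ballSlice f a, ∀ y ∈ Y, 2 - ε < ‖y + x‖

instance : Fact ((1 : ENNReal) ≤ 1) := ⟨le_rfl⟩

open scoped Classical

section Aux

variable {I : Type u} {X : I → Type u} [∀ i, NormedAddCommGroup (X i)]
  [∀ i, NormedSpace ℝ (X i)]

lemma lp_single_add (i : I) (a b : X i) :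
    lp.single 1 i (a + b) = lp.single 1 i a + lp.single 1 i b := by
  apply lp.ext
  funext j
  by_cases h : j = i
  · subst h
    simp [lp.coeFn_add, lp.single_apply_self]
  · simp [lp.coeFn_add, lp.single_apply_ne _ _ _ h]

lemma norm_lp_single (i : I) (a : X i) : ‖lp.single 1 i a‖ = ‖a‖ := by
  classical
  have h := lp.norm_single (p := 1) (E := X) (by norm_num) i a
  simpa using h

/-- `lp.single` as a continuous linear map. -/
noncomputable def lpSingleCLM (X : I → Type u) [∀ i, NormedAddCommGroup (X i)]
    [∀ i, NormedSpace ℝ (X i)] (i : I) : X i →L[ℝ] lp X 1 :=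
  LinearMap.mkContinuous
    { toFun := lp.single 1 i
      map_add' := lp_single_add i
      map_smul' := fun c a => lp.single_smul 1 i c a }
    1 (fun a => by
      show ‖lp.single 1 i a‖ ≤ 1 * ‖a‖
      rw [norm_lp_single, one_mul])

@[simp] lemma lpSingleCLM_apply (i : I) (a : X i) :
    lpSingleCLM X i a = lp.single 1 i a := rfl

/-- Coordinate evaluation as a continuous linear map. -/
noncomputable def lpEvalCLM (X : I → Type u) [∀ i, NormedAddCommGroup (X i)]
    [∀ i, NormedSpace ℝ (X i)] (i : I) : lp X 1 →L[ℝ] X i :=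
  LinearMap.mkContinuous
    { toFun := fun z => z i
      map_add' := fun x y => rfl
      map_smul' := fun c x => rfl }
    1 (fun z => by
      show ‖z i‖ ≤ 1 * ‖z‖
      rw [one_mul]; exact lp.norm_apply_le_norm one_ne_zero z i)

@[simp] lemma lpEvalCLM_apply (i : I) (z : lp X 1) : lpEvalCLM X i z = z i := rfl

lemma lp_norm_add_single (z : lp X 1) (i : I) (v : X i) :
    ‖z + lp.single 1 i v‖ = ‖z i + v‖ + (‖z‖ - ‖z i‖) := by
  classical
  have h01 : (0:ℝ) < (1 : ENNReal).toReal := by norm_num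
  have h1 : HasSum (fun j => ‖(z + lp.single 1 i v) j‖) ‖z + lp.single 1 i v‖ := by
    simpa using lp.hasSum_norm h01 (z + lp.single 1 i v)
  have h2 : HasSum (fun j => ‖z j‖) ‖z‖ := by simpa using lp.hasSum_norm h01 z
  have h3 : HasSum (Function.update (fun j => ‖z j‖) i ‖z i + v‖)
      (‖z i + v‖ - ‖z i‖ + ‖z‖) := h2.update i ‖z i + v‖
  have heq : (fun j => ‖(z + lp.single 1 i v) j‖) =
      Function.update (fun j => ‖z j‖) i ‖z i + v‖ := by
    funext j
    by_cases h : j = i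
    · subst h
      simp [lp.coeFn_add, lp.single_apply_self]
    · simp [lp.coeFn_add, lp.single_apply_ne _ _ _ h, Function.update_of_ne h, Pi.single_eq_of_ne h]
  rw [heq] at h1
  have h4 := h1.unique h3
  linarith

lemma exists_norm_comp_single_gt (F : lp X 1 →L[ℝ] ℝ) (hF : 0 < ‖F‖) {δ : ℝ} (hδ : 0 < δ) :
    ∃ i, ‖F‖ - δ < ‖F.comp (lpSingleCLM X i)‖ := by
  by_contra hcon
  push_neg at hcon
  set c := ‖F‖ - δ with hc
  have hc0 : 0 ≤ c := by
    rcases isEmpty_or_nonempty I with hI | hI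
    · exfalso
      have hsub : Subsingleton (lp X 1) := ⟨fun x y => lp.ext (Subsingleton.elim _ _)⟩
      have hF0 : F = 0 := by
        ext x
        rw [Subsingleton.elim x 0, map_zero]
        simp
      rw [hF0] at hF
      simp at hF
    · exact le_trans (norm_nonneg _) (hcon hI.some)
  have hbound : ∀ x : lp X 1, ‖F x‖ ≤ c * ‖x‖ := by
    intro x
    have hsum : HasSum (fun i => F (lp.single 1 i (x i))) (F x) :=
      (lp.hasSum_single (by norm_num) x).mapL F
    have hxnorm : HasSum (fun i => ‖x i‖) ‖x‖ := by
      simpa using lp.hasSum_norm (by norm_num : (0:ℝ) < (1 : ENNReal).toReal) x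
    have hs1 : Summable (fun i => ‖F (lp.single 1 i (x i))‖) := by
      refine Summable.of_nonneg_of_le (fun i => norm_nonneg _) (fun i => ?_)
        (hxnorm.summable.mul_left ‖F‖)
      calc ‖F (lp.single 1 i (x i))‖ ≤ ‖F‖ * ‖lp.single 1 i (x i)‖ := F.le_opNorm _
        _ = ‖F‖ * ‖x i‖ := by rw [norm_lp_single]
    calc ‖F x‖ = ‖∑' i, F (lp.single 1 i (x i))‖ := by rw [hsum.tsum_eq]
      _ ≤ ∑' i, ‖F (lp.single 1 i (x i))‖ := norm_tsum_le_tsum_norm hs1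
      _ ≤ ∑' i, c * ‖x i‖ := by
          refine Summable.tsum_le_tsum (fun i => ?_) hs1 (hxnorm.summable.mul_left c)
          calc ‖F (lp.single 1 i (x i))‖ = ‖(F.comp (lpSingleCLM X i)) (x i)‖ := rfl
            _ ≤ ‖F.comp (lpSingleCLM X i)‖ * ‖x i‖ := ContinuousLinearMap.le_opNorm _ _
            _ ≤ c * ‖x i‖ := mul_le_mul_of_nonneg_right (hcon i) (norm_nonneg _)
      _ = c * ‖x‖ := by rw [tsum_mul_left, hxnorm.tsum_eq]
  have : ‖F‖ ≤ c := F.opNorm_le_bound hc0 hbound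
  rw [hc] at this
  linarith

lemma forward_core {κ : Cardinal.{u}} (H : HasKDaugavet (lp X 1) κ) (i : I) (Y : Set (X i))
    (hYκ : Cardinal.mk Y ≤ κ) (hY1 : ∀ y ∈ Y, ‖y‖ = 1) (g : X i →L[ℝ] ℝ) (hg : 0 < ‖g‖)
    (a : ℝ) (ha : 0 < a) (ε : ℝ) (hε : 0 < ε) :
    ∃ x' : X i, ‖x'‖ ≤ 1 ∧ ‖g‖ - a < g x' ∧ ∀ y ∈ Y, 2 - ε < ‖y + x'‖ := by
  set G := g.comp (lpEvalCLM X i) with hGdef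
  have hGle : ‖G‖ ≤ ‖g‖ := by
    refine ContinuousLinearMap.opNorm_le_bound _ (norm_nonneg g) (fun z => ?_)
    calc ‖G z‖ = ‖g (z i)‖ := rfl
      _ ≤ ‖g‖ * ‖z i‖ := g.le_opNorm _
      _ ≤ ‖g‖ * ‖z‖ := by
          exact mul_le_mul_of_nonneg_left (lp.norm_apply_le_norm one_ne_zero z i)
            (norm_nonneg _)
  have hGge : ‖g‖ ≤ ‖G‖ := by
    refine ContinuousLinearMap.opNorm_le_bound _ (norm_nonneg G) (fun v => ?_)
    have hv : g v = G (lp.single 1 i v) := by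
      show g v = g ((lp.single 1 i v : lp X 1) i)
      rw [lp.single_apply_self]
    calc ‖g v‖ = ‖G (lp.single 1 i v)‖ := by rw [hv]
      _ ≤ ‖G‖ * ‖lp.single 1 i v‖ := G.le_opNorm _
      _ = ‖G‖ * ‖v‖ := by rw [norm_lp_single]
  have hGg : ‖G‖ = ‖g‖ := le_antisymm hGle hGge
  set Y' := lp.single 1 i '' Y with hY'def
  have hY'κ : Cardinal.mk Y' ≤ κ := le_trans Cardinal.mk_image_le hYκ
  have hY'1 : ∀ y ∈ Y', ‖y‖ = 1 := by
    rintro _ ⟨y, hy, rfl⟩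
    rw [norm_lp_single]
    exact hY1 y hy
  set a' := min a (ε / 2 * ‖g‖) with ha'def
  obtain ⟨x, ⟨hx1, hx2⟩, hx3⟩ :=
    H Y' hY'κ hY'1 G a' (lt_min ha (by positivity)) (ε / 2) (by positivity)
  rw [hGg] at hx2
  have hx2' : ‖g‖ - a' < g (x i) := hx2
  have hxi1 : ‖x i‖ ≤ 1 := le_trans (lp.norm_apply_le_norm one_ne_zero x i) hx1
  have hxi : 1 - ε / 2 < ‖x i‖ := by
    have t1 : g (x i) ≤ ‖g‖ * ‖x i‖ := le_trans (le_abs_self _) (g.le_opNorm _)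
    have t2 : a' ≤ ε / 2 * ‖g‖ := min_le_right _ _
    have t3 : ‖g‖ * (1 - ε / 2) < ‖g‖ * ‖x i‖ := by nlinarith
    exact (mul_lt_mul_iff_right₀ hg).mp t3
  refine ⟨x i, hxi1, ?_, ?_⟩
  · have : ‖g‖ - a ≤ ‖g‖ - a' := sub_le_sub_left (min_le_left _ _) _
    linarith
  · intro y hy
    have h3 := hx3 _ (Set.mem_image_of_mem _ hy)
    rw [add_comm] at h3
    rw [lp_norm_add_single x i y] at h3
    have : ‖y + x i‖ = ‖x i + y‖ := by rw [add_comm]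
    rw [this]
    linarith

lemma reverse_core {κ : Cardinal.{u}} (h : ∀ i, HasKDaugavet (X i) κ) (i : I)
    (Y : Set (lp X 1)) (hYκ : Cardinal.mk Y ≤ κ) (hY1 : ∀ y ∈ Y, ‖y‖ = 1)
    (F : lp X 1 →L[ℝ] ℝ) (a : ℝ) (ha : 0 < a) (g : X i →L[ℝ] ℝ) (hg : 0 < ‖g‖)
    (b : ℝ) (hb : 0 < b)
    (hFg : ∀ x : X i, ‖x‖ ≤ 1 → ‖g‖ - b < g x → ‖F‖ - a < F (lp.single 1 i x))
    (ε : ℝ) (hε : 0 < ε) : ∃ x ∈ ballSlice F a, ∀ y ∈ Y, 2 - ε < ‖y + x‖ := by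
  classical
  set Yi : Set (X i) := ((fun y : lp X 1 => ‖y i‖⁻¹ • y i) '' Y) ∩ {u | ‖u‖ = 1} with hYidef
  have hYiκ : Cardinal.mk Yi ≤ κ :=
    le_trans (Cardinal.mk_le_mk_of_subset Set.inter_subset_left)
      (le_trans Cardinal.mk_image_le hYκ)
  have hYi1 : ∀ u ∈ Yi, ‖u‖ = 1 := fun u hu => hu.2
  set a' := min b (ε / 2 * ‖g‖) with ha'def
  obtain ⟨x, ⟨hx1, hx2⟩, hx3⟩ :=
    h i Yi hYiκ hYi1 g a' (lt_min hb (by positivity)) ε hε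
  have hxnorm : 1 - ε / 2 < ‖x‖ := by
    have t1 : g x ≤ ‖g‖ * ‖x‖ := le_trans (le_abs_self _) (g.le_opNorm _)
    have t2 : a' ≤ ε / 2 * ‖g‖ := min_le_right _ _
    have t3 : ‖g‖ * (1 - ε / 2) < ‖g‖ * ‖x‖ := by nlinarith
    exact (mul_lt_mul_iff_right₀ hg).mp t3
  have hslice : ‖F‖ - a < F (lp.single 1 i x) := by
    refine hFg x hx1 ?_
    have : ‖g‖ - b ≤ ‖g‖ - a' := sub_le_sub_left (min_le_left _ _) _
    linarith
  refine ⟨lp.single 1 i x, ⟨by rw [norm_lp_single]; exact hx1, hslice⟩, ?_⟩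
  intro y hy
  have hynorm := hY1 y hy
  rw [lp_norm_add_single y i x, hynorm]
  have hyi_le : ‖y i‖ ≤ 1 := hynorm ▸ lp.norm_apply_le_norm one_ne_zero y i
  by_cases hyi : y i = 0
  · rw [hyi]
    simp only [zero_add, norm_zero, sub_zero]
    linarith
  · have hn : 0 < ‖y i‖ := norm_pos_iff.mpr hyi
    set u := ‖y i‖⁻¹ • y i with hudef
    have hu1 : ‖u‖ = 1 := by
      rw [hudef, norm_smul, norm_inv, norm_norm]
      field_simp
    have huYi : u ∈ Yi := ⟨⟨y, hy, rfl⟩, hu1⟩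
    have h4 := hx3 u huYi
    have hdiff : ‖u - y i‖ = 1 - ‖y i‖ := by
      have he : u - y i = (‖y i‖⁻¹ - 1) • y i := by
        rw [hudef, sub_smul, one_smul]
      have hinv : (1:ℝ) ≤ ‖y i‖⁻¹ := by
        nlinarith [mul_inv_cancel₀ hn.ne', inv_pos.mpr hn]
      rw [he, norm_smul, Real.norm_eq_abs, abs_of_nonneg (by linarith),
        sub_mul, inv_mul_cancel₀ hn.ne', one_mul]
    have htri : ‖u + x‖ ≤ ‖u - y i‖ + ‖y i + x‖ := by
      have he2 : u + x = (u - y i) + (y i + x) := by abel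
      rw [he2]
      exact norm_add_le _ _
    rw [hdiff] at htri
    linarith

end Aux

/-- The `ℓ₁`-sum of a family of Banach spaces has the `κ`-Daugavet property if and only
if every summand has the `κ`-Daugavet property. -/
theorem l1Sum_kDaugavet_iff {I : Type u} (X : I → Type u)
    [∀ i, NormedAddCommGroup (X i)] [∀ i, NormedSpace ℝ (X i)] [∀ i, CompleteSpace (X i)]
    (κ : Cardinal.{u}) :
    HasKDaugavet (lp X 1) κ ↔ ∀ i, HasKDaugavet (X i) κ := by
  constructor
  · intro H i Y hYκ hY1 f a ha ε hε
    by_cases hf : f = 0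
    · subst hf
      by_cases hX : ∃ z : X i, z ≠ 0
      · obtain ⟨z, hz⟩ := hX
        obtain ⟨g, hg1, -⟩ := exists_dual_vector ℝ z (norm_ne_zero_iff.mpr hz)
        obtain ⟨x', hx1, -, hx3⟩ :=
          forward_core H i Y hYκ hY1 g (by rw [hg1]; norm_num) 1 one_pos ε hε
        refine ⟨x', ⟨hx1, ?_⟩, hx3⟩
        simpa using ha
      · push_neg at hX
        refine ⟨0, ⟨by simp, by simpa using ha⟩, fun y hy => absurd (hY1 y hy) ?_⟩
        rw [hX y]
        simp
    · have hf' : 0 < ‖f‖ := norm_pos_iff.mpr hf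
      obtain ⟨x', hx1, hx2, hx3⟩ := forward_core H i Y hYκ hY1 f hf' a ha ε hε
      exact ⟨x', ⟨hx1, hx2⟩, hx3⟩
  · intro h Y hYκ hY1 F a ha ε hε
    by_cases hF : 0 < ‖F‖
    · obtain ⟨i, hi⟩ := exists_norm_comp_single_gt F hF (lt_min ha hF)
      set g := F.comp (lpSingleCLM X i) with hgdef
      have hmin1 : min a ‖F‖ ≤ a := min_le_left _ _
      have hmin2 : min a ‖F‖ ≤ ‖F‖ := min_le_right _ _
      have hg : 0 < ‖g‖ := by linarith
      have hb : 0 < ‖g‖ - (‖F‖ - a) := by linarith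
      refine reverse_core h i Y hYκ hY1 F a ha g hg _ hb (fun x hx hgx => ?_) ε hε
      have he : F (lp.single 1 i x) = g x := rfl
      rw [he]
      linarith
    · have hF0 : F = 0 := by
        have : ‖F‖ = 0 := le_antisymm (not_lt.mp hF) (norm_nonneg _)
        exact norm_eq_zero.mp this
      by_cases hX : ∃ i, ∃ z : X i, z ≠ 0
      · obtain ⟨i, z, hz⟩ := hX
        obtain ⟨g, hg1, -⟩ := exists_dual_vector ℝ z (norm_ne_zero_iff.mpr hz)
        refine reverse_core h i Y hYκ hY1 F a ha g (by rw [hg1]; norm_num) 1 one_pos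
          (fun x hx hgx => ?_) ε hε
        rw [hF0]
        simpa using ha
      · push_neg at hX
        refine ⟨0, ⟨by simp, ?_⟩, fun y hy => ?_⟩
        · rw [hF0]
          simpa using ha
        · exfalso
          have hy0 : y = 0 := by
            apply lp.ext
            funext j
            rw [hX j (y j)]
            simp
          have := hY1 y hy
          rw [hy0] at this
          simp at this
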